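/- arXiv:1801.03414 — 5 statements merged into one kernel-verified Lean document; each statement's English description precedes it below -/
import Mathlib

section
/- For every positive integer n, the element wₙ = (ab)ⁿ(ba)⁻ⁿ of the free group F₂ is nontrivial and is not a proper power: there is no g ∈ F₂ and integer k ≥ 2 with gᵏ = wₙ. -/
/-!
The reduced word of `(ab)ⁿ(ba)⁻ⁿ` is `(ab)ⁿ(a⁻¹b⁻¹)ⁿ`, and it is cyclically reduced. Writing
`g.toWord = C ++ R ++ C⁻¹` with `R` cyclically reduced, the reduced word of `gᵏ` is
`C ++ Rᵏ ++ C⁻¹`; if this is cyclically reduced then `C` is empty, so `gᵏ = w` makes the word of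
`w` equal to `Rᵏ`. For `k ≥ 2`, `R` is then both a prefix and a suffix of length at most half
the word, so its letters lie in both the positive half `(ab)ⁿ` and the negative half
`(a⁻¹b⁻¹)ⁿ`, which share no letter; hence `R` is empty and so is `w`.
-/

open List

theorem List.eq_nil_of_append_eq_flatten_replicate {β : Type*} {A B R : List β} {m : ℕ}
    (hm : 2 ≤ m) (hlen : A.length = B.length) (hAB : A.Disjoint B)
    (h : A ++ B = (replicate m R).flatten) : R = [] := by
  have hRlen : R.length ≤ A.length := by
    have := congrArg length h
    simp only [length_append, length_flatten, map_replicate, sum_replicate, smul_eq_mul] at this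
    nlinarith
  obtain ⟨m, rfl⟩ := Nat.exists_eq_add_of_le' hm
  have hpre : R <+: A := prefix_of_prefix_length_le
    (by rw [h, replicate_succ, flatten_cons]; exact prefix_append _ _) (prefix_append A B) hRlen
  have hsuf : R <:+ B := suffix_of_suffix_length_le
    (by rw [h, replicate_succ', flatten_concat]; exact suffix_append _ _) (suffix_append A B)
    (hlen ▸ hRlen)
  exact eq_nil_iff_forall_not_mem.2 fun x hx => hAB (hpre.subset hx) (hsuf.subset hx)

namespace FreeGroup

variable {α : Type*}

theorem IsCyclicallyReduced.eq_nil_of_append_invRev {C M : List (α × Bool)}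
    (h : IsCyclicallyReduced (C ++ M ++ invRev C)) : C = [] := by
  cases C with
  | nil => rfl
  | cons c C =>
    have := h.2 (c.1, !c.2) (by rw [invRev_cons, ← append_assoc]; exact getLast?_concat ..) c
      (by simp) rfl
    simp at this

theorem toWord_pow_eq_flatten_replicate [DecidableEq α] {x : FreeGroup α} {m : ℕ} (hm : m ≠ 0)
    (h : IsCyclicallyReduced (x ^ m).toWord) :
    (x ^ m).toWord = (replicate m (reduceCyclically x.toWord)).flatten := by
  rw [toWord_pow, reduceCyclically.reduce_flatten_replicate isReduced_toWord, if_neg hm] at h ⊢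
  rw [h.eq_nil_of_append_invRev]
  simp

theorem isCyclicallyReduced_flatten_replicate_append {a b : α} (hab : a ≠ b) (n : ℕ) :
    IsCyclicallyReduced ((replicate n [(a, true), (b, true)]).flatten ++
      (replicate n [(a, false), (b, false)]).flatten) := by
  rcases Nat.eq_zero_or_pos n with rfl | hn
  · simp
  have hpos : IsCyclicallyReduced [(a, true), (b, true)] := by
    simp [IsCyclicallyReduced, IsReduced]
  have hneg : IsCyclicallyReduced [(a, false), (b, false)] := by
    simp [IsCyclicallyReduced, IsReduced]
  refine ⟨isChain_append.2 ⟨(hpos.flatten_replicate n).isReduced,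
    (hneg.flatten_replicate n).isReduced, ?_⟩, ?_⟩
  · simp [getLast?_flatten_replicate hn.ne', head?_flatten_replicate hn.ne', hab.symm]
  · simp [getLast?_append, getLast?_flatten_replicate hn.ne', head?_append,
      head?_flatten_replicate hn.ne', hab.symm]

theorem toWord_mul_pow_mul_inv_pow [DecidableEq α] {a b : α} (hab : a ≠ b) (n : ℕ) :
    ((of a * of b) ^ n * ((of b * of a) ^ n)⁻¹).toWord =
      (replicate n [(a, true), (b, true)]).flatten ++
        (replicate n [(a, false), (b, false)]).flatten := by
  have hmk : (of a * of b) ^ n * ((of b * of a) ^ n)⁻¹ =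
      mk ((replicate n [(a, true), (b, true)]).flatten ++
        (replicate n [(a, false), (b, false)]).flatten) := by
    rw [← mul_mk, ← pow_mk, ← pow_mk, ← inv_pow, mul_inv_rev]
    rfl
  rw [hmk, toWord_mk, (isCyclicallyReduced_flatten_replicate_append hab n).isReduced.reduce_eq]

end FreeGroup

open FreeGroup

/-- For every positive integer `n`, the element `wₙ = (ab)ⁿ(ba)⁻ⁿ` of the free group `F₂`
on two generators `a`, `b` is nontrivial and is not a proper power: there is no `g ∈ F₂`
and integer `k ≥ 2` with `gᵏ = wₙ`. -/
theorem stmt_0 (n : ℕ) (hn : 0 < n)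
    (a b : FreeGroup (Fin 2)) (ha : a = FreeGroup.of 0) (hb : b = FreeGroup.of 1)
    (w : FreeGroup (Fin 2)) (hw : w = (a * b) ^ n * ((b * a) ^ n)⁻¹) :
    w ≠ 1 ∧ ¬ ∃ (g : FreeGroup (Fin 2)) (k : ℤ), 2 ≤ k ∧ g ^ k = w := by
  subst ha hb
  have h01 : (0 : Fin 2) ≠ 1 := by decide
  have hword := toWord_mul_pow_mul_inv_pow h01 n
  have hcr := isCyclicallyReduced_flatten_replicate_append h01 n
  have hdisj : (replicate n [((0 : Fin 2), true), (1, true)]).flatten.Disjoint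
      (replicate n [(0, false), (1, false)]).flatten := fun x hxA hxB => by
    simp at hxA hxB
    grind
  rw [← hw] at hword
  rw [← hword] at hcr
  have hne : w.toWord ≠ [] := by simp [hword, hn.ne']
  refine ⟨fun h => hne (toWord_eq_nil_iff.2 h), ?_⟩
  rintro ⟨g, k, hk, rfl⟩
  lift k to ℕ using by omega
  rw [zpow_natCast] at hword hcr hne
  have hpow := toWord_pow_eq_flatten_replicate (by omega) hcr
  have hR : reduceCyclically g.toWord = [] :=
    eq_nil_of_append_eq_flatten_replicate (by omega) (by simp) hdisj (hword ▸ hpow)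
  exact hne (by simp [hpow, hR])
end

section
/- For every positive integer n, the three cyclic subgroups ⟨a⟩, ⟨b⟩ and ⟨wₙ⟩ of the free group F₂ are pairwise non-conjugate: for any two distinct subgroups H ≠ K among these three, there is no g ∈ F₂ with gHg⁻¹ = K. -/
/-- Negation permutation of `ℤ`. -/
private def permA : Equiv.Perm ℤ :=
  ⟨fun x => -x, fun x => -x, fun x => by ring, fun x => by ring⟩

/-- The permutation `x ↦ 1 - x` of `ℤ`. -/
private def permB : Equiv.Perm ℤ :=
  ⟨fun x => 1 - x, fun x => 1 - x, fun x => by ring, fun x => by ring⟩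

private lemma permAB_pow (m : ℕ) : ∀ x : ℤ, ((permA * permB) ^ m) x = x - m := by
  induction m with
  | zero => intro x; simp
  | succ k ih =>
    intro x
    rw [pow_succ, Equiv.Perm.mul_apply]
    have h1 : (permA * permB) x = x - 1 := by
      simp [Equiv.Perm.mul_apply, permA, permB]
    rw [h1, ih]
    push_cast
    ring

private lemma permBA_eq_inv : permB * permA = (permA * permB)⁻¹ := by
  rw [eq_inv_iff_mul_eq_one]
  ext x
  simp [Equiv.Perm.mul_apply, permA, permB]

/-- The homomorphism `F₂ → Perm ℤ` sending the generators to the two reflections. -/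
private def phi : FreeGroup (Fin 2) →* Equiv.Perm ℤ :=
  FreeGroup.lift ![permA, permB]

private lemma w_ne_one (n : ℕ) (hn : 0 < n) :
    (FreeGroup.of (0 : Fin 2) * FreeGroup.of 1) ^ n *
      ((FreeGroup.of (1 : Fin 2) * FreeGroup.of 0) ^ n)⁻¹ ≠ 1 := by
  intro h
  have hphi := congrArg phi h
  rw [map_mul, map_pow, map_inv, map_pow, map_mul, map_mul, map_one] at hphi
  have hA : phi (FreeGroup.of (0 : Fin 2)) = permA := by
    simp [phi]
  have hB : phi (FreeGroup.of (1 : Fin 2)) = permB := by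
    simp [phi]
  rw [hA, hB, permBA_eq_inv, ← inv_pow, inv_inv] at hphi
  rw [← pow_add] at hphi
  have := congrArg (fun p : Equiv.Perm ℤ => p 0) hphi
  simp only [permAB_pow, Equiv.Perm.one_apply] at this
  omega

/-- Exponent-count homomorphism for generator `i`. -/
private def expCount (i : Fin 2) : FreeGroup (Fin 2) →* Multiplicative ℤ :=
  FreeGroup.lift (fun j => if j = i then Multiplicative.ofAdd (1 : ℤ) else 1)

private lemma expCount_of_self (i : Fin 2) :
    expCount i (FreeGroup.of i) = Multiplicative.ofAdd (1 : ℤ) := by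
  simp [expCount]

private lemma expCount_of_ne {i j : Fin 2} (h : j ≠ i) :
    expCount i (FreeGroup.of j) = 1 := by
  simp [expCount, h]

private lemma expCount_conj (i : Fin 2) (g x : FreeGroup (Fin 2)) :
    expCount i (g * x * g⁻¹) = expCount i x := by
  simp [map_mul, map_inv, mul_comm, mul_assoc]

private lemma expCount_w (i : Fin 2) (n : ℕ) (a b : FreeGroup (Fin 2)) :
    expCount i ((a * b) ^ n * ((b * a) ^ n)⁻¹) = 1 := by
  rw [map_mul, map_inv, map_pow, map_pow, map_mul, map_mul,
    mul_comm (expCount i b) (expCount i a), mul_inv_cancel]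

private lemma key {g x y : FreeGroup (Fin 2)}
    (h : Subgroup.map (MulAut.conj g).toMonoidHom (Subgroup.zpowers x) = Subgroup.zpowers y) :
    ∃ k : ℤ, (g * x * g⁻¹) ^ k = y := by
  rw [MonoidHom.map_zpowers] at h
  have hy : y ∈ Subgroup.zpowers ((MulAut.conj g).toMonoidHom x) :=
    h ▸ Subgroup.mem_zpowers y
  obtain ⟨k, hk⟩ := Subgroup.mem_zpowers_iff.mp hy
  exact ⟨k, by simpa using hk⟩

/-- From the conjugacy witness, get the image equation under `expCount i`. -/
private lemma key_img {g x y : FreeGroup (Fin 2)} (i : Fin 2)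
    (h : Subgroup.map (MulAut.conj g).toMonoidHom (Subgroup.zpowers x) = Subgroup.zpowers y) :
    ∃ k : ℤ, (g * x * g⁻¹) ^ k = y ∧ (expCount i x) ^ k = expCount i y := by
  obtain ⟨k, hk⟩ := key h
  refine ⟨k, hk, ?_⟩
  have := congrArg (expCount i) hk
  rwa [map_zpow, expCount_conj] at this

private lemma ofAdd_one_zpow_ne_one (k : ℤ) :
    Multiplicative.ofAdd (1 : ℤ) ^ k = 1 → k = 0 := by
  intro h
  have := congrArg Multiplicative.toAdd h
  simpa using this

/-- For every positive integer `n`, the three cyclic subgroups `⟨a⟩`, `⟨b⟩` and `⟨wₙ⟩` of the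
free group `F₂` on generators `a`, `b`, where `wₙ = (ab)ⁿ(ba)⁻ⁿ`, are pairwise non-conjugate:
for any two distinct subgroups `H ≠ K` among these three, there is no `g ∈ F₂` with
`gHg⁻¹ = K`. -/
theorem stmt_1 (n : ℕ) (hn : 0 < n)
    (a b : FreeGroup (Fin 2)) (ha : a = FreeGroup.of 0) (hb : b = FreeGroup.of 1)
    (w : FreeGroup (Fin 2)) (hw : w = (a * b) ^ n * ((b * a) ^ n)⁻¹) :
    ∀ H K : Subgroup (FreeGroup (Fin 2)),
      H ∈ ({Subgroup.zpowers a, Subgroup.zpowers b, Subgroup.zpowers w} :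
        Set (Subgroup (FreeGroup (Fin 2)))) →
      K ∈ ({Subgroup.zpowers a, Subgroup.zpowers b, Subgroup.zpowers w} :
        Set (Subgroup (FreeGroup (Fin 2)))) →
      H ≠ K →
      ¬ ∃ g : FreeGroup (Fin 2), Subgroup.map (MulAut.conj g).toMonoidHom H = K := by
  intro H K hH hK hne
  rintro ⟨g, hg⟩
  have hwne : w ≠ 1 := by rw [hw, ha, hb]; exact w_ne_one n hn
  have hEa0 : expCount 0 a = Multiplicative.ofAdd (1 : ℤ) := by
    rw [ha]; exact expCount_of_self 0
  have hEb1 : expCount 1 b = Multiplicative.ofAdd (1 : ℤ) := by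
    rw [hb]; exact expCount_of_self 1
  have hEa1 : expCount 1 a = 1 := by rw [ha]; exact expCount_of_ne (by decide)
  have hEb0 : expCount 0 b = 1 := by rw [hb]; exact expCount_of_ne (by decide)
  have hEw : ∀ i : Fin 2, expCount i w = 1 := fun i => by
    rw [hw]; exact expCount_w i n a b
  have hne1 : Multiplicative.ofAdd (1 : ℤ) ≠ 1 := by decide
  simp only [Set.mem_insert_iff, Set.mem_singleton_iff] at hH hK
  rcases hH with rfl | rfl | rfl <;> rcases hK with rfl | rfl | rfl
  · exact hne rfl
  · -- ⟨a⟩ → ⟨b⟩ : use expCount 1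
    obtain ⟨k, -, himg⟩ := key_img 1 hg
    rw [hEa1, hEb1, one_zpow] at himg
    exact hne1 himg.symm
  · -- ⟨a⟩ → ⟨w⟩ : use expCount 0, get k = 0, so w = 1
    obtain ⟨k, hk, himg⟩ := key_img 0 hg
    rw [hEa0, hEw 0] at himg
    have : k = 0 := ofAdd_one_zpow_ne_one k himg
    rw [this, zpow_zero] at hk
    exact hwne hk.symm
  · -- ⟨b⟩ → ⟨a⟩ : use expCount 0
    obtain ⟨k, -, himg⟩ := key_img 0 hg
    rw [hEb0, hEa0, one_zpow] at himg
    exact hne1 himg.symm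
  · exact hne rfl
  · -- ⟨b⟩ → ⟨w⟩ : use expCount 1
    obtain ⟨k, hk, himg⟩ := key_img 1 hg
    rw [hEb1, hEw 1] at himg
    have : k = 0 := ofAdd_one_zpow_ne_one k himg
    rw [this, zpow_zero] at hk
    exact hwne hk.symm
  · -- ⟨w⟩ → ⟨a⟩ : use expCount 0
    obtain ⟨k, -, himg⟩ := key_img 0 hg
    rw [hEw 0, hEa0, one_zpow] at himg
    exact hne1 himg.symm
  · -- ⟨w⟩ → ⟨b⟩ : use expCount 1
    obtain ⟨k, -, himg⟩ := key_img 1 hg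
    rw [hEw 1, hEb1, one_zpow] at himg
    exact hne1 himg.symm
  · exact hne rfl
end

section
/- Each of the elements r₁ = d₁d₂d₃⁻¹d₁⁻¹d₃d₂⁻¹, r₂ = d₁d₂d₁⁻¹d₂⁻¹ and r₃ = d₁d₃⁻¹d₁⁻¹d₃ of the free group F₃ is nontrivial and is not a proper power: for each i ∈ {1,2,3} there is no g ∈ F₃ and integer k ≥ 2 with gᵏ = rᵢ. -/
set_option linter.unusedTactic false

/-- The discrete Heisenberg group, as triples of integers. -/
@[ext] structure Heis where
  a : ℤ
  b : ℤ
  c : ℤ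

namespace Heis

instance : Group Heis where
  mul x y := ⟨x.a + y.a, x.b + y.b, x.c + y.c + x.a * y.b⟩
  one := ⟨0, 0, 0⟩
  inv x := ⟨-x.a, -x.b, x.a * x.b - x.c⟩
  mul_assoc x y z := by
    ext
    · show x.a + y.a + z.a = x.a + (y.a + z.a); ring
    · show x.b + y.b + z.b = x.b + (y.b + z.b); ring
    · show x.c + y.c + x.a * y.b + z.c + (x.a + y.a) * z.b
        = x.c + (y.c + z.c + y.a * z.b) + x.a * (y.b + z.b); ring
  one_mul x := by
    ext
    · show 0 + x.a = x.a; ring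
    · show 0 + x.b = x.b; ring
    · show 0 + x.c + 0 * x.b = x.c; ring
  mul_one x := by
    ext
    · show x.a + 0 = x.a; ring
    · show x.b + 0 = x.b; ring
    · show x.c + 0 + x.a * 0 = x.c; ring
  inv_mul_cancel x := by
    ext
    · show -x.a + x.a = 0; ring
    · show -x.b + x.b = 0; ring
    · show x.a * x.b - x.c + x.c + -x.a * x.b = 0; ring

@[simp] lemma mul_def (x y : Heis) :
    x * y = ⟨x.a + y.a, x.b + y.b, x.c + y.c + x.a * y.b⟩ := rfl

@[simp] lemma inv_def (x : Heis) : x⁻¹ = ⟨-x.a, -x.b, x.a * x.b - x.c⟩ := rfl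

@[simp] lemma one_def : (1 : Heis) = ⟨0, 0, 0⟩ := rfl

lemma pow_def (x : Heis) (n : ℕ) :
    x ^ n = ⟨n * x.a, n * x.b, n * x.c + (n.choose 2 : ℤ) * x.a * x.b⟩ := by
  induction n with
  | zero => simp
  | succ n ih =>
    rw [pow_succ, ih]
    have h : (n + 1).choose 2 = n.choose 2 + n := by
      rw [Nat.choose_succ_succ]
      simp [Nat.choose_one_right, Nat.add_comm]
    ext <;> simp [h] <;> push_cast <;> ring

/-- The central element `z = (0,0,1)` is not a `k`-th power for any `k ≥ 2`. -/
lemma z_not_power : ∀ (x : Heis) (k : ℤ), 2 ≤ k → x ^ k ≠ ⟨0, 0, 1⟩ := by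
  intro x k hk h
  lift k to ℕ using (by linarith) with n
  rw [zpow_natCast, pow_def] at h
  have hn : (2 : ℤ) ≤ n := by exact_mod_cast hk
  have ha : (n : ℤ) * x.a = 0 := congrArg Heis.a h
  have hc : (n : ℤ) * x.c + (n.choose 2 : ℤ) * x.a * x.b = 1 := congrArg Heis.c h
  have hn0 : (n : ℤ) ≠ 0 := by linarith
  have ha0 : x.a = 0 := by
    rcases mul_eq_zero.mp ha with h' | h'
    · exact absurd h' hn0
    · exact h'
  have hc' : (n : ℤ) * x.c = 1 := by rw [ha0] at hc; linarith
  have : (n : ℤ) ≤ 1 := Int.le_of_dvd one_pos ⟨x.c, hc'.symm⟩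
  linarith

end Heis

/-- If some homomorphism to the Heisenberg group sends `r` to the central element `z`,
then `r` is nontrivial and not a proper power. -/
lemma key_s5 (r : FreeGroup (Fin 3)) (φ : FreeGroup (Fin 3) →* Heis)
    (hφ : φ r = ⟨0, 0, 1⟩) :
    r ≠ 1 ∧ ¬ ∃ (g : FreeGroup (Fin 3)) (k : ℤ), 2 ≤ k ∧ g ^ k = r := by
  constructor
  · intro h
    rw [h, map_one] at hφ
    simp [Heis.one_def, Heis.mk.injEq] at hφ
  · rintro ⟨g, k, hk, hgk⟩
    have : (φ g) ^ k = ⟨0, 0, 1⟩ := by rw [← map_zpow, hgk, hφ]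
    exact Heis.z_not_power (φ g) k hk this

/-- Each of the elements `r₁ = d₁d₂d₃⁻¹d₁⁻¹d₃d₂⁻¹`, `r₂ = d₁d₂d₁⁻¹d₂⁻¹` and
`r₃ = d₁d₃⁻¹d₁⁻¹d₃` of the free group `F₃` on generators `d₁, d₂, d₃` is nontrivial and
is not a proper power: there is no `g ∈ F₃` and integer `k ≥ 2` with `gᵏ = rᵢ`. -/
theorem stmt_5
    (d₁ d₂ d₃ : FreeGroup (Fin 3))
    (h₁ : d₁ = FreeGroup.of 0) (h₂ : d₂ = FreeGroup.of 1) (h₃ : d₃ = FreeGroup.of 2)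
    (r₁ r₂ r₃ : FreeGroup (Fin 3))
    (hr₁ : r₁ = d₁ * d₂ * d₃⁻¹ * d₁⁻¹ * d₃ * d₂⁻¹)
    (hr₂ : r₂ = d₁ * d₂ * d₁⁻¹ * d₂⁻¹)
    (hr₃ : r₃ = d₁ * d₃⁻¹ * d₁⁻¹ * d₃) :
    ∀ r ∈ ({r₁, r₂, r₃} : Set (FreeGroup (Fin 3))),
      r ≠ 1 ∧ ¬ ∃ (g : FreeGroup (Fin 3)) (k : ℤ), 2 ≤ k ∧ g ^ k = r := by
  subst h₁ h₂ h₃ hr₁ hr₂ hr₃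
  intro r hr
  rcases hr with h | h | h
  · -- r₁: send d₁ ↦ x, d₂ ↦ y, d₃ ↦ 1
    refine h ▸ key_s5 _ (FreeGroup.lift ![⟨1,0,0⟩, ⟨0,1,0⟩, ⟨0,0,0⟩]) ?_
    simp only [map_mul, map_inv, FreeGroup.lift_apply_of]
    ext <;> simp
  · -- r₂: send d₁ ↦ x, d₂ ↦ y
    refine h ▸ key_s5 _ (FreeGroup.lift ![⟨1,0,0⟩, ⟨0,1,0⟩, ⟨0,0,0⟩]) ?_
    simp only [map_mul, map_inv, FreeGroup.lift_apply_of]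
    ext <;> simp
  · -- r₃: send d₁ ↦ x, d₃ ↦ y⁻¹
    refine h ▸ key_s5 _ (FreeGroup.lift ![⟨1,0,0⟩, ⟨0,0,0⟩, ⟨0,-1,0⟩]) ?_
    simp only [map_mul, map_inv, FreeGroup.lift_apply_of]
    ext <;> simp
end

section
/- The three cyclic subgroups ⟨r₁⟩, ⟨r₂⟩ and ⟨r₃⟩ of the free group F₃, where r₁ = d₁d₂d₃⁻¹d₁⁻¹d₃d₂⁻¹, r₂ = d₁d₂d₁⁻¹d₂⁻¹ and r₃ = d₁d₃⁻¹d₁⁻¹d₃, are pairwise non-conjugate: for any two distinct subgroups H ≠ K among these three, there is no g ∈ F₃ with gHg⁻¹ = K. -/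
set_option maxRecDepth 100000

def px : Equiv.Perm (Fin 5) := ⟨![0,3,4,2,1], ![0,4,3,1,2], by decide, by decide⟩
def py : Equiv.Perm (Fin 5) := ⟨![3,0,1,2,4], ![1,2,3,0,4], by decide, by decide⟩
def pz : Equiv.Perm (Fin 5) := ⟨![4,2,0,1,3], ![2,3,1,4,0], by decide, by decide⟩

def A₁ : Equiv.Perm (Fin 5) := px * py * pz⁻¹ * px⁻¹ * pz * py⁻¹
def A₂ : Equiv.Perm (Fin 5) := px * py * px⁻¹ * py⁻¹
def A₃ : Equiv.Perm (Fin 5) := px * pz⁻¹ * px⁻¹ * pz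

/-- the test homomorphism -/
def φ : FreeGroup (Fin 3) →* Equiv.Perm (Fin 5) := FreeGroup.lift ![px, py, pz]

/-- key reduction: a finite check rules out conjugacy of the cyclic subgroups -/
lemma noConj {G : Type} [Group G] (ψ : FreeGroup (Fin 3) →* G)
    (a b : FreeGroup (Fin 3)) (N : ℕ) (hN : 0 < N) (hpow : (ψ a) ^ N = 1)
    (h : ∀ m : ℕ, m < N → ∀ g : G, g * (ψ a) ^ m * g⁻¹ ≠ ψ b) :
    ¬ ∃ g : FreeGroup (Fin 3),
      Subgroup.map (MulAut.conj g).toMonoidHom (Subgroup.zpowers a) = Subgroup.zpowers b := by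
  rintro ⟨g, hg⟩
  have hb : b ∈ Subgroup.zpowers b := Subgroup.mem_zpowers b
  rw [← hg, Subgroup.mem_map] at hb
  obtain ⟨w, hw, hgw⟩ := hb
  obtain ⟨n, rfl⟩ := hw
  have hgw' : g * a ^ n * g⁻¹ = b := hgw
  have key : ψ g * (ψ a) ^ n * (ψ g)⁻¹ = ψ b := by
    have := congrArg ψ hgw'
    simpa [map_mul, map_zpow] using this
  have hmodlt : n % (N : ℤ) < (N : ℤ) := Int.emod_lt_of_pos n (by exact_mod_cast hN)
  have hmodnn : 0 ≤ n % (N : ℤ) := Int.emod_nonneg n (by exact_mod_cast hN.ne')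
  have hzpow : (ψ a) ^ n = (ψ a) ^ (n % (N : ℤ)).toNat := by
    conv_lhs => rw [← Int.emod_add_mul_ediv n (N : ℤ)]
    rw [zpow_add, zpow_mul, zpow_natCast, hpow, one_zpow, mul_one,
      ← zpow_natCast, Int.toNat_of_nonneg hmodnn]
  have hlt : (n % (N : ℤ)).toNat < N := by omega
  exact h _ hlt (ψ g) (by rw [← hzpow]; exact key)

lemma phi0 : φ (FreeGroup.of 0) = px := by simp [φ]
lemma phi1 : φ (FreeGroup.of 1) = py := by simp [φ]
lemma phi2 : φ (FreeGroup.of 2) = pz := by simp [φ]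

/-- The three cyclic subgroups `⟨r₁⟩`, `⟨r₂⟩` and `⟨r₃⟩` of the free group `F₃`, where
`r₁ = d₁d₂d₃⁻¹d₁⁻¹d₃d₂⁻¹`, `r₂ = d₁d₂d₁⁻¹d₂⁻¹` and `r₃ = d₁d₃⁻¹d₁⁻¹d₃`, are pairwise
non-conjugate: for any two distinct subgroups `H ≠ K` among these three, there is no
`g ∈ F₃` with `gHg⁻¹ = K`. -/
theorem stmt_6
    (d₁ d₂ d₃ : FreeGroup (Fin 3))
    (h₁ : d₁ = FreeGroup.of 0) (h₂ : d₂ = FreeGroup.of 1) (h₃ : d₃ = FreeGroup.of 2)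
    (r₁ r₂ r₃ : FreeGroup (Fin 3))
    (hr₁ : r₁ = d₁ * d₂ * d₃⁻¹ * d₁⁻¹ * d₃ * d₂⁻¹)
    (hr₂ : r₂ = d₁ * d₂ * d₁⁻¹ * d₂⁻¹)
    (hr₃ : r₃ = d₁ * d₃⁻¹ * d₁⁻¹ * d₃) :
    ∀ H K : Subgroup (FreeGroup (Fin 3)),
      H ∈ ({Subgroup.zpowers r₁, Subgroup.zpowers r₂, Subgroup.zpowers r₃} :
        Set (Subgroup (FreeGroup (Fin 3)))) →
      K ∈ ({Subgroup.zpowers r₁, Subgroup.zpowers r₂, Subgroup.zpowers r₃} :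
        Set (Subgroup (FreeGroup (Fin 3)))) →
      H ≠ K →
      ¬ ∃ g : FreeGroup (Fin 3), Subgroup.map (MulAut.conj g).toMonoidHom H = K := by
  have e1 : φ r₁ = A₁ := by
    simp only [hr₁, h₁, h₂, h₃, map_mul, map_inv, phi0, phi1, phi2, A₁]
  have e2 : φ r₂ = A₂ := by
    simp only [hr₂, h₁, h₂, map_mul, map_inv, phi0, phi1, A₂]
  have e3 : φ r₃ = A₃ := by
    simp only [hr₃, h₁, h₃, map_mul, map_inv, phi0, phi2, A₃]
  intro H K hH hK hne
  simp only [Set.mem_insert_iff, Set.mem_singleton_iff] at hH hK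
  rcases hH with rfl | rfl | rfl <;> rcases hK with rfl | rfl | rfl
  · exact absurd rfl hne
  · exact noConj φ r₁ r₂ 3 (by norm_num) (by rw [e1]; decide)
      (by simp only [e1, e2]; decide)
  · exact noConj φ r₁ r₃ 3 (by norm_num) (by rw [e1]; decide)
      (by simp only [e1, e3]; decide)
  · exact noConj φ r₂ r₁ 5 (by norm_num) (by rw [e2]; decide)
      (by simp only [e2, e1]; decide)
  · exact absurd rfl hne
  · exact noConj φ r₂ r₃ 5 (by norm_num) (by rw [e2]; decide)
      (by simp only [e2, e3]; decide)
  · exact noConj φ r₃ r₁ 2 (by norm_num) (by rw [e3]; decide)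
      (by simp only [e3, e1]; decide)
  · exact noConj φ r₃ r₂ 2 (by norm_num) (by rw [e3]; decide)
      (by simp only [e3, e2]; decide)
  · exact absurd rfl hne
end

section
/- There is no labeling f of the vertices of the 3-dimensional cube graph Q₃ by values in {1, 2, 3, 4} such that: (i) for every pair of adjacent vertices u, v, at least one of f(u), f(v) equals 4; and (ii) for every vertex v with f(v) = 4, each of the values 1, 2 and 3 occurs as f(u) for some vertex u adjacent to v. -/
/-- The 3-dimensional cube graph `Q₃`: vertices are functions `Fin 3 → Bool`, with two
vertices adjacent exactly when they differ in precisely one coordinate. -/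
def cubeAdj (u v : Fin 3 → Bool) : Prop :=
  ∃! i : Fin 3, u i ≠ v i

instance (u v : Fin 3 → Bool) : Decidable (cubeAdj u v) :=
  decidable_of_iff (∃ i, u i ≠ v i ∧ ∀ j, u j ≠ v j → j = i) Iff.rfl

private def V (a b c : Bool) : Fin 3 → Bool := ![a, b, c]

private lemma nbr : ∀ (a b c : Bool) (u : Fin 3 → Bool), cubeAdj u (V a b c) →
    u = V (!a) b c ∨ u = V a (!b) c ∨ u = V a b (!c) := by decide

private lemma adjV1 : ∀ a b c : Bool, cubeAdj (V (!a) b c) (V a b c) := by decide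
private lemma adjV2 : ∀ a b c : Bool, cubeAdj (V a (!b) c) (V a b c) := by decide
private lemma adjV3 : ∀ a b c : Bool, cubeAdj (V a b (!c)) (V a b c) := by decide

/-- There is no labeling `f` of the vertices of the cube graph `Q₃` by values in
`{1, 2, 3, 4}` such that (i) for every pair of adjacent vertices `u, v`, at least one of
`f(u), f(v)` equals `4`, and (ii) for every vertex `v` with `f(v) = 4`, each of the values
`1`, `2` and `3` occurs as `f(u)` for some vertex `u` adjacent to `v`. -/
theorem stmt_11 :
    ¬ ∃ f : (Fin 3 → Bool) → ℕ,
      (∀ v, f v ∈ ({1, 2, 3, 4} : Set ℕ)) ∧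
      (∀ u v, cubeAdj u v → f u = 4 ∨ f v = 4) ∧
      (∀ v, f v = 4 → ∀ c ∈ ({1, 2, 3} : Set ℕ), ∃ u, cubeAdj u v ∧ f u = c) := by
  rintro ⟨f, hmem, hedge, hfull⟩
  simp only [Set.mem_insert_iff, Set.mem_singleton_iff] at hmem hfull
  have key : ∀ a b c : Bool, f (V a b c) = 4 → ∀ x, (x = 1 ∨ x = 2 ∨ x = 3) →
      f (V (!a) b c) = x ∨ f (V a (!b) c) = x ∨ f (V a b (!c)) = x := by
    intro a b c h4 x hx
    obtain ⟨u, hu, hux⟩ := hfull _ h4 x hx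
    rcases nbr a b c u hu with h | h | h <;> subst h <;> tauto
  have dk : ∀ a b c : Bool, f (V a b c) = 4 →
      f (V (!a) b c) ≠ f (V a (!b) c) ∧ f (V (!a) b c) ≠ f (V a b (!c)) ∧
      f (V a (!b) c) ≠ f (V a b (!c)) ∧
      f (V (!a) b c) ≠ 4 ∧ f (V a (!b) c) ≠ 4 ∧ f (V a b (!c)) ≠ 4 := by
    intro a b c h4
    have k1 := key a b c h4 1 (by tauto)
    have k2 := key a b c h4 2 (by tauto)
    have k3 := key a b c h4 3 (by tauto)
    rcases k1 with h|h|h <;> rcases k2 with g|g|g <;> rcases k3 with e|e|e <;> omega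
  by_cases h0 : f (V false false false) = 4
  · -- 4-class is the even vertices
    have d0 := dk false false false h0
    simp only [Bool.not_false] at d0
    have h110 : f (V true true false) = 4 := by
      have := hedge _ _ (adjV1 false true false)
      simp only [Bool.not_false] at this
      omega
    have h101 : f (V true false true) = 4 := by
      have := hedge _ _ (adjV1 false false true)
      simp only [Bool.not_false] at this
      omega
    have d1 := dk true true false h110
    have d2 := dk true false true h101
    simp only [Bool.not_true, Bool.not_false] at d1 d2
    have m1 := hmem (V true false false)
    have m2 := hmem (V false true false)
    have m3 := hmem (V false false true)
    have m4 := hmem (V true true true)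
    omega
  · -- 4-class is the odd vertices
    have h100 : f (V true false false) = 4 := by
      have := hedge _ _ (adjV1 true false false)
      simp only [Bool.not_true] at this
      omega
    have h010 : f (V false true false) = 4 := by
      have := hedge _ _ (adjV2 false true false)
      simp only [Bool.not_true] at this
      omega
    have h001 : f (V false false true) = 4 := by
      have := hedge _ _ (adjV3 false false true)
      simp only [Bool.not_true] at this
      omega
    have d1 := dk true false false h100
    have d2 := dk false true false h010
    have d3 := dk false false true h001
    simp only [Bool.not_true, Bool.not_false] at d1 d2 d3
    have m1 := hmem (V false false false)
    have m2 := hmem (V true true false)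
    have m3 := hmem (V true false true)
    have m4 := hmem (V false true true)
    omega
end
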